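/- The 4-state PFA A_car is carefully synchronizing: the word w = a b c a b a b c c a (i.e., abc(ab)^2c^2a) of length 10 carefully synchronizes A_car, and no word of length less than 10 carefully synchronizes A_car. In particular, the shortest carefully synchronizing word of A_car has length 10 > (4−1)^2 = 9, so the Černý bound (n−1)^2 fails for PFAs. -/

import Mathlib

namespace PaperSync

variable {Q A : Type*}

/-- The extension of a partial transition function `δ : Q → A → Option Q` to words. -/
def wordMap (δ : Q → A → Option Q) : Q → List A → Option Q
  | q, [] => some q
  | q, x :: w => (δ q x).bind fun q' => wordMap δ q' w

/-- A word `w` carefully synchronizes the PFA `δ`: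
`δ(q, w)` is defined for every state and all values agree. -/
def CarefullySync (δ : Q → A → Option Q) (w : List A) : Prop :=
  ∃ qbar : Q, ∀ q : Q, wordMap δ q w = some qbar

open Classical in
/-- The image of a set of states under a word: defined iff `δ(q,w)` is defined
for all `q ∈ S`, in which case it is `{δ(q,w) : q ∈ S}`. -/
noncomputable def setImage (δ : Q → A → Option Q) (S : Set Q) (w : List A) :
    Option (Set Q) :=
  if ∀ q ∈ S, (wordMap δ q w).isSome then
    some {q' | ∃ q ∈ S, wordMap δ q w = some q'}
  else none

/-- A PFA is one-cluster with respect to a letter `a`: `a` is defined at every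
state and the functional digraph `G_a` of `a` has exactly one weakly connected
component. -/
def OneCluster (δ : Q → A → Option Q) (a : A) : Prop :=
  (∀ q : Q, (δ q a).isSome) ∧
  ∀ p q : Q, Relation.EqvGen (fun u v => δ u a = some v) p q

/-- The vertex set of the `a`-cycle: states returning to themselves under some
positive power of `a`. -/
def cycleSet (δ : Q → A → Option Q) (a : A) : Set Q :=
  {q | ∃ k : ℕ, 1 ≤ k ∧ wordMap δ q (List.replicate k a) = some q}

/-- The level of a state: the least `k` with `δ(q, a^k)` on the `a`-cycle. -/
noncomputable def levelOf (δ : Q → A → Option Q) (a : A) (q : Q) : ℕ :=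
  sInf {k | ∃ p ∈ cycleSet δ a, wordMap δ q (List.replicate k a) = some p}

/-- The level of `G_a`: the maximal level of a state. -/
noncomputable def levelG [Fintype Q] (δ : Q → A → Option Q) (a : A) : ℕ :=
  Finset.univ.sup (levelOf δ a)

/-- The three-letter alphabet of the automaton `A_car`. -/
inductive L3 | a | b | c
deriving DecidableEq

instance : Fintype L3 where
  elems := {.a, .b, .c}
  complete := fun x => by cases x <;> simp

/-- The 4-state PFA `A_car` from Fig. 1. -/
def dcar (q : Fin 4) (x : L3) : Option (Fin 4) :=
  match q.val, x with
  | 0, .a => some 1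
  | 0, .b => none
  | 0, .c => some 1
  | 1, .a => some 1
  | 1, .b => some 2
  | 1, .c => none
  | 2, .a => some 2
  | 2, .b => some 3
  | 2, .c => some 3
  | 3, .a => some 3
  | 3, .b => some 0
  | 3, .c => some 0
  | _, _ => none

/-- The word `abc(ab)^2c^2a`. -/
def wcar : List L3 := [.a, .b, .c, .a, .b, .a, .b, .c, .c, .a]

lemma wordMap_append (δ : Q → A → Option Q) (u v : List A) (q : Q) :
    wordMap δ q (u ++ v) = (wordMap δ q u).bind fun p => wordMap δ p v := by
  induction u generalizing q with
  | nil => simp [wordMap]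
  | cons x u ih =>
    simp only [List.cons_append, wordMap]
    cases δ q x with
    | none => rfl
    | some p => simp [ih]

/-- One step of the powerset automaton. -/
def stepS (S : Finset (Fin 4)) (x : L3) : Option (Finset (Fin 4)) :=
  if h : ∀ q ∈ S, (dcar q x).isSome then
    some (S.attach.image fun q => (dcar q.1 x).get (h q.1 q.2))
  else none

def wordStep : Finset (Fin 4) → List L3 → Option (Finset (Fin 4))
  | S, [] => some S
  | S, x :: w => (stepS S x).bind fun S' => wordStep S' w

lemma stepS_spec {S S' : Finset (Fin 4)} {x : L3} (h : stepS S x = some S') :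
    ∀ p : Fin 4, p ∈ S' ↔ ∃ q ∈ S, dcar q x = some p := by
  intro p
  unfold stepS at h
  split at h
  · rename_i hall
    cases h
    simp only [Finset.mem_image, Finset.mem_attach, true_and, Subtype.exists]
    constructor
    · rintro ⟨q, hq, rfl⟩
      exact ⟨q, hq, (Option.some_get (hall q hq)).symm⟩
    · rintro ⟨q, hq, hd⟩
      exact ⟨q, hq, by simp [Option.get_of_mem _ hd]⟩
  · exact absurd h (by simp)

lemma wordStep_spec : ∀ (w : List L3) (S : Finset (Fin 4)),
    (∀ q ∈ S, (wordMap dcar q w).isSome) →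
    ∃ T, wordStep S w = some T ∧
      ∀ q' : Fin 4, (q' ∈ T ↔ ∃ q ∈ S, wordMap dcar q w = some q') := by
  intro w
  induction w with
  | nil =>
    intro S _
    exact ⟨S, rfl, fun q' => by simp [wordMap, eq_comm]⟩
  | cons x w ih =>
    intro S h
    have hx : ∀ q ∈ S, (dcar q x).isSome := by
      intro q hq
      have := h q hq
      simp only [wordMap] at this
      cases hd : dcar q x with
      | none => rw [hd] at this; simp at this
      | some p => simp
    have hstep : stepS S x = some (S.attach.image
        fun q => (dcar q.1 x).get (hx q.1 q.2)) := by
      unfold stepS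
      rw [dif_pos hx]
    set S' := S.attach.image fun q => (dcar q.1 x).get (hx q.1 q.2) with hS'
    have hmem := stepS_spec hstep
    have h' : ∀ p ∈ S', (wordMap dcar p w).isSome := by
      intro p hp
      obtain ⟨q, hq, hd⟩ := (hmem p).1 hp
      have := h q hq
      simp only [wordMap, hd, Option.bind_some] at this
      exact this
    obtain ⟨T, hT, hTmem⟩ := ih S' h'
    refine ⟨T, ?_, ?_⟩
    · simp [wordStep, hstep, hT]
    · intro q'
      rw [hTmem q']
      constructor
      · rintro ⟨p, hp, hwp⟩
        obtain ⟨q, hq, hd⟩ := (hmem p).1 hp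
        exact ⟨q, hq, by simp [wordMap, hd, hwp]⟩
      · rintro ⟨q, hq, hwq⟩
        have hd := hx q hq
        cases hds : dcar q x with
        | none => rw [hds] at hd; simp at hd
        | some p =>
          refine ⟨p, (hmem p).2 ⟨q, hq, hds⟩, ?_⟩
          simpa [wordMap, hds] using hwq

/-- Sets reachable in the powerset automaton after `n` steps from `univ`. -/
def reach : ℕ → Finset (Finset (Fin 4))
  | 0 => {Finset.univ}
  | n + 1 => (reach n).biUnion fun S =>
      (stepS S .a).toFinset ∪ (stepS S .b).toFinset ∪ (stepS S .c).toFinset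

lemma wordStep_mem_reach : ∀ (w : List L3) (n : ℕ) (S T : Finset (Fin 4)),
    S ∈ reach n → wordStep S w = some T → T ∈ reach (n + w.length) := by
  intro w
  induction w with
  | nil =>
    intro n S T hS hT
    simp only [wordStep] at hT
    cases hT
    simpa using hS
  | cons x w ih =>
    intro n S T hS hT
    simp only [wordStep] at hT
    cases hst : stepS S x with
    | none => rw [hst] at hT; simp at hT
    | some S' =>
      rw [hst] at hT
      simp only [Option.bind_some] at hT
      have hS' : S' ∈ reach (n + 1) := by
        simp only [reach, Finset.mem_biUnion]
        refine ⟨S, hS, ?_⟩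
        cases x <;> simp [hst]
      have := ih (n + 1) S' T hS' hT
      simpa [Nat.add_assoc, Nat.add_comm 1 w.length] using this

lemma no_small_reach : ∀ n ≤ 9, ∀ T ∈ reach n, T.card ≠ 1 := by decide

/-- `wcar = abc(ab)^2c^2a` carefully synchronizes `A_car`, no
shorter word does, and its length `10` exceeds the Černý bound `(4-1)^2 = 9`. -/
theorem Acar_shortest_word :
    CarefullySync dcar wcar ∧
    (∀ v : List L3, v.length < 10 → ¬ CarefullySync dcar v) ∧
    wcar.length = 10 ∧ 10 > (4 - 1) ^ 2 := by
  refine ⟨⟨1, by decide⟩, ?_, rfl, by norm_num⟩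
  rintro v hv ⟨qbar, hq⟩
  have hdef : ∀ q ∈ (Finset.univ : Finset (Fin 4)), (wordMap dcar q v).isSome := by
    intro q _
    simp [hq q]
  obtain ⟨T, hT, hTmem⟩ := wordStep_spec v Finset.univ hdef
  have hTsing : T = {qbar} := by
    ext q'
    rw [hTmem q']
    simp only [Finset.mem_singleton]
    constructor
    · rintro ⟨q, -, hw⟩
      rw [hq q] at hw
      exact (Option.some_inj.1 hw).symm
    · rintro rfl
      exact ⟨q', Finset.mem_univ _, hq q'⟩
  have hr : T ∈ reach (0 + v.length) :=
    wordStep_mem_reach v 0 Finset.univ T (by simp [reach]) hT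
  have := no_small_reach (0 + v.length) (by omega) T hr
  rw [hTsing] at this
  simp at this

end PaperSync
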